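/- Let (μ, (f_i)) be a monic system with associated operators S_i f = f_i·(f∘σ) on L²(μ). Then for every finite word I = i₁…iₙ, the operator S_I S_I* (where S_I = S_{i₁}⋯S_{iₙ}) equals multiplication by the characteristic function of the cylinder set C(I). -/

import Mathlib

open MeasureTheory ENNReal

noncomputable section

abbrev Word (N : ℕ) := ℕ → Fin N

/-- The left shift `σ` deleting the first letter. -/
def shift {N : ℕ} (ω : Word N) : Word N := fun n => ω (n + 1)

/-- The map `σ_i` prepending the letter `i`. -/
def prepend {N : ℕ} (i : Fin N) (ω : Word N) : Word N :=
  fun n => match n with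
  | 0 => i
  | n + 1 => ω n

/-- The cylinder set determined by a finite word. -/
def cyl {N : ℕ} (w : List (Fin N)) : Set (Word N) :=
  {ω | ∀ k : Fin w.length, ω k = w.get k}

/-!
If `s` is a left inverse of `p` and `μ.map p = |F|² μ`, the adjoint of the weighted composition
operator `h ↦ F · (h ∘ s)` on `L²(μ)` is `g ↦ (g / F) ∘ p`. For `S_i` (with `p = σ_i`,
`s = σ`, `F = f_i`) this makes `S_i S_i^*` multiplication by the indicator of `{x | f_i x ≠ 0}`,
which is `C(i)` up to a null set, and `S_{iI} S_{iI}^* = S_i (S_I S_I^*) S_i^*` gives the general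
cylinder by induction on the word.
-/

open Function

section WeightedComposition

variable {α : Type*} [MeasurableSpace α] {μ : Measure α} {F : α → ℂ} {p s : α → α}

theorem MeasureTheory.Measure.eq_withDensity_of_rnDeriv_ae_eq {ν : Measure α} [SFinite ν] [SigmaFinite μ]
    (hνμ : ν ≪ μ) {ρ : α → ℝ≥0∞} (hρ : ν.rnDeriv μ =ᵐ[μ] ρ) : ν = μ.withDensity ρ := by
  rw [← Measure.withDensity_rnDeriv_eq ν μ hνμ, withDensity_congr_ae hρ]

theorem ae_imp_of_ae_withDensity_enorm_sq (hF : AEMeasurable F μ) {P : α → Prop}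
    (hP : ∀ᵐ x ∂μ.withDensity fun x => ‖F x‖ₑ ^ 2, P x) : ∀ᵐ x ∂μ, F x ≠ 0 → P x := by
  rw [ae_withDensity_iff' (hF.enorm.pow_const 2)] at hP
  simpa using hP

theorem memLp_div_withDensity_enorm_sq (hF : AEStronglyMeasurable F μ) {g : α → ℂ}
    (hg : MemLp g 2 μ) : MemLp (g / F) 2 (μ.withDensity fun x => ‖F x‖ₑ ^ 2) := by
  have hgF : AEStronglyMeasurable (g / F) μ :=
    (hg.1.aemeasurable.div hF.aemeasurable).aestronglyMeasurable
  refine ⟨hgF.mono_ac (withDensity_absolutelyContinuous _ _), ?_⟩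
  have hg2 := (eLpNorm_lt_top_iff_lintegral_rpow_enorm_lt_top two_ne_zero ofNat_ne_top).mp hg.2
  rw [eLpNorm_lt_top_iff_lintegral_rpow_enorm_lt_top two_ne_zero ofNat_ne_top,
    lintegral_withDensity_eq_lintegral_mul₀ (hF.enorm.pow_const 2) (hgF.enorm.pow_const _)]
  refine lt_of_le_of_lt (lintegral_mono fun x => ?_) hg2
  simp only [toReal_ofNat, rpow_two, Pi.mul_apply, Pi.div_apply, ← mul_pow, ← enorm_mul]
  rcases eq_or_ne (F x) 0 with hx | hx
  · simp [hx]
  · rw [mul_div_cancel₀ _ hx]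

theorem integral_withDensity_enorm_sq (φ : α → ℂ) (hF : AEMeasurable F μ) :
    ∫ x, φ x ∂μ.withDensity (fun x => ‖F x‖ₑ ^ 2) = ∫ x, (‖F x‖ ^ 2 : ℝ) • φ x ∂μ := by
  rw [integral_withDensity_eq_integral_toReal_smul₀ (hF.enorm.pow_const 2)
    (ae_of_all _ fun x => by simp)]
  simp

theorem map_map_eq_self_of_leftInverse (hp : Measurable p) (hs : Measurable s)
    (hsp : LeftInverse s p) : (μ.map p).map s = μ := by
  rw [Measure.map_map hs hp, hsp.comp_eq_id, Measure.map_id]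

variable (hp : Measurable p) (hs : Measurable s) (hsp : LeftInverse s p)
  (hmap : μ.map p = μ.withDensity fun x => ‖F x‖ₑ ^ 2)
include hp hs hsp hmap

/-- `v ∘ s` depends on the representative of `v`, but only where `F` vanishes. -/
theorem mul_comp_ae_eq_of_ae_eq (hF : AEMeasurable F μ) {v v' : α → ℂ} (hv : v =ᵐ[μ] v') :
    (fun x => F x * v (s x)) =ᵐ[μ] fun x => F x * v' (s x) := by
  rw [← map_map_eq_self_of_leftInverse (μ := μ) hp hs hsp] at hv
  have hvs := ae_imp_of_ae_withDensity_enorm_sq hF (hmap ▸ ae_of_ae_map hs.aemeasurable hv)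
  filter_upwards [hvs] with x hx
  rcases eq_or_ne (F x) 0 with hF0 | hF0
  · simp [hF0]
  · rw [hx hF0]

theorem adjoint_apply_ae_eq_div_comp (hF : AEStronglyMeasurable F μ)
    (T : Lp ℂ 2 μ →L[ℂ] Lp ℂ 2 μ) (hT : ∀ h : Lp ℂ 2 μ, ⇑(T h) =ᵐ[μ] fun x => F x * h (s x))
    (g : Lp ℂ 2 μ) : ⇑(T.adjoint g) =ᵐ[μ] (⇑g / F) ∘ p := by
  have hmem : MemLp ((⇑g / F) ∘ p) 2 μ :=
    (hmap ▸ memLp_div_withDensity_enorm_sq hF (Lp.memLp g)).comp_of_map hp.aemeasurable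
  suffices T.adjoint g = hmem.toLp _ from this ▸ hmem.coeFn_toLp
  refine ext_inner_left ℂ fun h => ?_
  have hh : AEStronglyMeasurable (⇑h ∘ s) (μ.map p) := by
    refine AEStronglyMeasurable.comp_aemeasurable ?_ hs.aemeasurable
    rw [map_map_eq_self_of_leftInverse hp hs hsp]
    exact (Lp.memLp h).1
  have hgF : AEStronglyMeasurable (⇑g / F) (μ.map p) :=
    hmap ▸ ((Lp.memLp g).1.aemeasurable.div hF.aemeasurable).aestronglyMeasurable.mono_ac
      (withDensity_absolutelyContinuous _ _)
  calc inner ℂ h (T.adjoint g)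
      = inner ℂ (T h) g := T.adjoint_inner_right h g
    _ = ∫ x, (starRingEnd ℂ) (F x * h (s x)) * g x ∂μ := by
        rw [L2.inner_def]
        refine integral_congr_ae ?_
        filter_upwards [hT h] with x hx
        rw [RCLike.inner_apply, hx, mul_comm]
    _ = ∫ x, (starRingEnd ℂ) (h (s x)) * (g x / F x) ∂μ.map p := by
        rw [hmap, integral_withDensity_enorm_sq _ hF.aemeasurable]
        refine integral_congr_ae (ae_of_all _ fun x => ?_)
        rcases eq_or_ne (F x) 0 with hF0 | hF0
        · simp [hF0]
        · simp only [Complex.real_smul, Complex.ofReal_pow, ← Complex.mul_conj', map_mul]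
          field_simp
    _ = ∫ x, (starRingEnd ℂ) (h (s (p x))) * (g (p x) / F (p x)) ∂μ :=
        integral_map hp.aemeasurable (hh.star.mul hgF)
    _ = inner ℂ h (hmem.toLp _) := by
        rw [L2.inner_def]
        refine integral_congr_ae ?_
        filter_upwards [hmem.coeFn_toLp] with x hx
        rw [RCLike.inner_apply, hx, hsp x, mul_comm]
        rfl

end WeightedComposition

section Words

variable {N : ℕ}

theorem measurable_shift : Measurable (shift (N := N)) :=
  measurable_pi_lambda _ fun n => measurable_pi_apply (n + 1)

theorem measurable_prepend (i : Fin N) : Measurable (prepend i) :=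
  measurable_pi_lambda _ fun
    | 0 => measurable_const
    | n + 1 => measurable_pi_apply n

theorem leftInverse_shift_prepend (i : Fin N) : LeftInverse shift (prepend i) := fun _ => rfl

theorem prepend_shift {i : Fin N} {x : Word N} (hx : x 0 = i) : prepend i (shift x) = x := by
  funext n
  cases n with
  | zero => exact hx.symm
  | succ n => rfl

@[simp]
theorem cyl_nil : cyl ([] : List (Fin N)) = Set.univ := by
  ext ω
  simp [cyl]

theorem mem_cyl_cons {i : Fin N} {w : List (Fin N)} {x : Word N} :
    x ∈ cyl (i :: w) ↔ x 0 = i ∧ shift x ∈ cyl w := by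
  simp only [cyl, Set.mem_ofPred_eq, Fin.forall_fin_succ, List.length_cons]
  rfl

variable {μ : Measure (Word N)} {F : Word N → ℂ} {i : Fin N}

theorem ae_head_eq_of_ne_zero (hF : AEMeasurable F μ)
    (hmap : μ.map (prepend i) = μ.withDensity fun x => ‖F x‖ₑ ^ 2) :
    ∀ᵐ x ∂μ, F x ≠ 0 → x 0 = i := by
  refine ae_imp_of_ae_withDensity_enorm_sq hF (hmap ▸ ?_)
  rw [ae_map_iff (measurable_prepend i).aemeasurable
    (measurableSet_eq_fun (measurable_pi_apply 0) measurable_const)]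
  exact ae_of_all _ fun _ => rfl

theorem ae_eq_indicator_cyl_cons (hF : AEMeasurable F μ)
    (hmap : μ.map (prepend i) = μ.withDensity fun x => ‖F x‖ₑ ^ 2)
    (hne : ∀ᵐ x ∂μ, x 0 = i → F x ≠ 0) (T : Lp ℂ 2 μ →L[ℂ] Lp ℂ 2 μ)
    (hT : ∀ h : Lp ℂ 2 μ, ⇑(T h) =ᵐ[μ] fun x => F x * h (shift x))
    {w : List (Fin N)} {g : Word N → ℂ} {v : Lp ℂ 2 μ}
    (hv : ⇑v =ᵐ[μ] (cyl w).indicator ((g / F) ∘ prepend i)) :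
    ⇑(T v) =ᵐ[μ] (cyl (i :: w)).indicator g := by
  filter_upwards [hT v, mul_comp_ae_eq_of_ae_eq (measurable_prepend i) measurable_shift
    (leftInverse_shift_prepend i) hmap hF hv, ae_head_eq_of_ne_zero hF hmap, hne]
    with x hTx hvx hhead hFx
  rw [hTx, hvx]
  by_cases hx0 : x 0 = i
  · by_cases hxw : shift x ∈ cyl w
    · rw [Set.indicator_of_mem hxw, Set.indicator_of_mem (mem_cyl_cons.2 ⟨hx0, hxw⟩),
        comp_apply, prepend_shift hx0, Pi.div_apply, mul_div_cancel₀ _ (hFx hx0)]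
    · rw [Set.indicator_of_notMem hxw, mul_zero,
        Set.indicator_of_notMem fun hx => hxw (mem_cyl_cons.1 hx).2]
  · rw [Set.indicator_of_notMem fun hx => hx0 (mem_cyl_cons.1 hx).1,
      not_ne_iff.1 (mt hhead hx0), zero_mul]

end Words

theorem monicSystem_word_projection_general {N : ℕ}
    (μ : Measure (Word N)) [IsFiniteMeasure μ] (f : Fin N → Word N → ℂ)
    (hf2 : ∀ i, MemLp (f i) 2 μ)
    (hac : ∀ i, μ.map (prepend i) ≪ μ)
    (hrn : ∀ i, (μ.map (prepend i)).rnDeriv μ =ᵐ[μ]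
      fun x => ENNReal.ofReal (‖f i x‖ ^ 2))
    (hne : ∀ i, ∀ᵐ x ∂μ, x 0 = i → f i x ≠ 0)
    (S : Fin N → (Lp ℂ 2 μ →L[ℂ] Lp ℂ 2 μ))
    (hS : ∀ i (g : Lp ℂ 2 μ), ⇑(S i g) =ᵐ[μ] fun x => f i x * g (shift x))
    (w : List (Fin N)) :
    ∀ g : Lp ℂ 2 μ,
      ⇑(((w.map S).prod * ContinuousLinearMap.adjoint (w.map S).prod) g) =ᵐ[μ]
        Set.indicator (cyl w) ⇑g := by
  have hmap (i : Fin N) : μ.map (prepend i) = μ.withDensity fun x => ‖f i x‖ₑ ^ 2 :=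
    Measure.eq_withDensity_of_rnDeriv_ae_eq (hac i) <| (hrn i).trans <| .of_forall fun x => by
      simp [ofReal_pow, ofReal_norm]
  induction w with
  | nil =>
    intro g
    simp [← ContinuousLinearMap.star_eq_adjoint]
  | cons i w ih =>
    intro g
    set T := (w.map S).prod
    have hsplit : (S i * T * (S i * T).adjoint) g = S i ((T * T.adjoint) ((S i).adjoint g)) := by
      simp [← ContinuousLinearMap.star_eq_adjoint, star_mul, mul_assoc]
    rw [List.map_cons, List.prod_cons, hsplit]
    refine ae_eq_indicator_cyl_cons (hf2 i).1.aemeasurable (hmap i) (hne i) (S i) (hS i) ?_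
    exact (ih _).trans <| Filter.EventuallyEq.indicator <|
      adjoint_apply_ae_eq_div_comp (measurable_prepend i) measurable_shift
        (leftInverse_shift_prepend i) (hmap i) (hf2 i).1 (S i) (hS i) g

theorem monicSystem_word_projection {N : ℕ} (hN : 2 ≤ N)
    (μ : Measure (Word N)) [IsFiniteMeasure μ] (f : Fin N → Word N → ℂ)
    (hf2 : ∀ i, MemLp (f i) 2 μ)
    (hac : ∀ i, μ.map (prepend i) ≪ μ)
    (hrn : ∀ i, (μ.map (prepend i)).rnDeriv μ =ᵐ[μ]
      fun x => ENNReal.ofReal (‖f i x‖ ^ 2))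
    (hne : ∀ i, ∀ᵐ x ∂μ, x 0 = i → f i x ≠ 0)
    (S : Fin N → (Lp ℂ 2 μ →L[ℂ] Lp ℂ 2 μ))
    (hS : ∀ i (g : Lp ℂ 2 μ), ⇑(S i g) =ᵐ[μ] fun x => f i x * g (shift x))
    (w : List (Fin N)) :
    ∀ g : Lp ℂ 2 μ,
      ⇑(((w.map S).prod * ContinuousLinearMap.adjoint (w.map S).prod) g) =ᵐ[μ]
        Set.indicator (cyl w) ⇑g :=
  monicSystem_word_projection_general μ f hf2 hac hrn hne S hS w
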